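/- For k ≥ 1 there is no vector v ∈ ℝ^{8+k} with all positive entries satisfying U v = [1]_{(8+k)×1}, where U is the block matrix [[U₁₁, U₁₂, 0_{5×k}],[U₂₁, U₂₂, 1_{3×k}],[0_{k×5}, 1_{k×3}, 3I_k]] and [U₁₁ U₁₂; U₂₁ U₂₂] is the 8×8 Gram matrix U₈. -/

import Mathlib

noncomputable def U8 : Matrix (Fin 8) (Fin 8) ℝ :=
  !![3,1,1,1,0,0,0,1;
     1,3,1,0,1,1,0,0;
     1,1,3,0,0,0,1,0;
     1,0,0,3,1,1,1,0;
     0,1,0,1,3,0,1,1;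
     0,1,0,1,0,3,1,1;
     0,0,1,1,1,1,3,1;
     1,0,0,0,1,1,1,3]

/-- The `(8+k) × (8+k)` block matrix
`[[U₁₁, U₁₂, 0],[U₂₁, U₂₂, 1],[0, 1, 3I]]`, where `[U₁₁ U₁₂; U₂₁ U₂₂] = U8`
is split into blocks of sizes `5` and `3`. -/
noncomputable def bigU (k : ℕ) : Matrix (Fin (8+k)) (Fin (8+k)) ℝ :=
  fun i j =>
    if hi : (i : ℕ) < 8 then
      if hj : (j : ℕ) < 8 then U8 ⟨i, hi⟩ ⟨j, hj⟩
      else if 5 ≤ (i : ℕ) then 1 else 0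
    else
      if hj : (j : ℕ) < 8 then (if 5 ≤ (j : ℕ) then 1 else 0)
      else if (i : ℕ) = (j : ℕ) then 3 else 0

/-!
The combination `y = e₁ - e₂ - e₄ - e₅ + 2 e₆` of the rows of `bigU k` (rows counted from `0`) is
entrywise nonnegative and equals `3` in column `6`, whereas the same combination of the all-ones
right-hand side is `1 - 1 - 1 - 1 + 2 = 0`. For a positive solution `v` this would give
`0 = y ⬝ᵥ (bigU k *ᵥ v) = (y ᵥ* bigU k) ⬝ᵥ v ≥ 3 v₆ > 0`.
-/

open Matrix

theorem not_exists_pos_mulVec_eq_of_vecMul_nonneg {m n R : Type*} [Fintype m] [Fintype n]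
    [Semiring R] [PartialOrder R] [IsStrictOrderedRing R] (A : Matrix m n R) (b : m → R)
    (y : m → R) (hyA : 0 ≤ y ᵥ* A) (hyb : y ⬝ᵥ b ≤ 0) (hpos : ∃ j, 0 < (y ᵥ* A) j) :
    ¬ ∃ v : n → R, (∀ j, 0 < v j) ∧ A *ᵥ v = b := by
  rintro ⟨v, hv, rfl⟩
  obtain ⟨j, hj⟩ := hpos
  have hlt : 0 < (y ᵥ* A) ⬝ᵥ v :=
    Finset.sum_pos' (fun i _ => mul_nonneg (hyA i) (hv i).le)
      ⟨j, Finset.mem_univ j, mul_pos hj (hv j)⟩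
  rw [dotProduct_mulVec] at hyb
  exact hyb.not_gt hlt

namespace BigU

variable (k : ℕ)

noncomputable def rowCertificate : Fin (8 + k) → ℝ :=
  Pi.single (Fin.castAdd k 1) 1 - Pi.single (Fin.castAdd k 2) 1 - Pi.single (Fin.castAdd k 4) 1
    - Pi.single (Fin.castAdd k 5) 1 + Pi.single (Fin.castAdd k 6) 2

lemma rowCertificate_vecMul_apply (j : Fin (8 + k)) :
    (rowCertificate k ᵥ* bigU k) j =
      bigU k (Fin.castAdd k 1) j - bigU k (Fin.castAdd k 2) j - bigU k (Fin.castAdd k 4) j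
        - bigU k (Fin.castAdd k 5) j + 2 * bigU k (Fin.castAdd k 6) j := by
  simp [rowCertificate, add_vecMul, sub_vecMul]

lemma rowCertificate_vecMul_nonneg : 0 ≤ rowCertificate k ᵥ* bigU k := by
  intro ⟨j, hj⟩
  rw [rowCertificate_vecMul_apply]
  by_cases hj8 : j < 8
  · interval_cases j <;> norm_num [bigU, U8]
  · norm_num [bigU, hj8]

lemma rowCertificate_vecMul_six : (rowCertificate k ᵥ* bigU k) (Fin.castAdd k 6) = 3 := by
  rw [rowCertificate_vecMul_apply]
  norm_num [bigU, U8]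

lemma rowCertificate_dotProduct_one : rowCertificate k ⬝ᵥ (fun _ => 1) = 0 := by
  norm_num [rowCertificate, sub_dotProduct, add_dotProduct]

end BigU

open BigU in
theorem stmt17_general (k : ℕ) :
    ¬ ∃ v : Fin (8+k) → ℝ,
        (∀ i, 0 < v i) ∧ (bigU k).mulVec v = fun _ => 1 :=
  not_exists_pos_mulVec_eq_of_vecMul_nonneg (bigU k) _ (rowCertificate k)
    (rowCertificate_vecMul_nonneg k) (rowCertificate_dotProduct_one k).le
    ⟨Fin.castAdd k 6, by rw [rowCertificate_vecMul_six]; norm_num⟩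

/-- For `k ≥ 1` there is no positive solution of `bigU k • v = (1,…,1)ᵀ`. -/
theorem stmt17 (k : ℕ) (hk : 1 ≤ k) :
    ¬ ∃ v : Fin (8+k) → ℝ,
        (∀ i, 0 < v i) ∧ (bigU k).mulVec v = fun _ => 1 :=
  stmt17_general k
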